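/- Merging invariance: if S = {a_1, ..., a_m} ⊆ {0,...,n−1} with a_1 < ... < a_m and a_{j+1} = a_j + 1 for some j, then A_{k+1}(S) = A_{k+1}(S'), where S' = {a_1, ..., a_j, a_{j+2} − 1, ..., a_m − 1} ⊆ {0,...,n−2} is obtained by merging the two consecutive points a_j, a_j+1 into one. -/

import Mathlib

/-- Two blocks `B`, `B'` form a crossing: there are `i, k ∈ B` and `j, l ∈ B'`
with `i < j < k < l` or `i > j > k > l`. -/
def Crosses (B B' : Finset ℕ) : Prop :=
  ∃ i ∈ B, ∃ k ∈ B, ∃ j ∈ B', ∃ l ∈ B',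
    (i < j ∧ j < k ∧ k < l) ∨ (i > j ∧ j > k ∧ k > l)

/-- `ρ` is a set partition of `{0, ..., n-1}`. -/
def IsPartitionOf (n : ℕ) (ρ : Finset (Finset ℕ)) : Prop :=
  (∀ B ∈ ρ, B.Nonempty) ∧
  (∀ B ∈ ρ, ∀ B' ∈ ρ, B ≠ B' → Disjoint B B') ∧
  ρ.sup id = Finset.range n

/-- `r` is an orientation of the crossing graph `G(ρ)`: it relates exactly the
pairs of distinct crossing blocks of `ρ`, choosing one direction for each edge. -/
def IsOrientation (ρ : Finset (Finset ℕ)) (r : Finset ℕ → Finset ℕ → Prop) : Prop :=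
  (∀ B B', r B B' → B ∈ ρ ∧ B' ∈ ρ ∧ B ≠ B' ∧ Crosses B B') ∧
  (∀ B ∈ ρ, ∀ B' ∈ ρ, B ≠ B' → Crosses B B' → (r B B' ↔ ¬ r B' B))

/-- An orientation is acyclic if it has no directed cycle. -/
def AcyclicRel (r : Finset ℕ → Finset ℕ → Prop) : Prop :=
  ∀ B, ¬ Relation.TransGen r B B

/-- `r` is a root-connected orientation of `G(ρ)` with root `S`: it is an acyclic
orientation and `S` is its unique source. -/
def RootConnected (ρ : Finset (Finset ℕ)) (r : Finset ℕ → Finset ℕ → Prop)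
    (S : Finset ℕ) : Prop :=
  IsOrientation ρ r ∧ AcyclicRel r ∧ S ∈ ρ ∧ (∀ B', ¬ r B' S) ∧
    (∀ B ∈ ρ, (∀ B', ¬ r B' B) → B = S)

/-- `ρ ∈ M_S(n)`: a partition of `{0,...,n-1}` with `S` as a block and all
other blocks of size 2. -/
def MSPartition (n : ℕ) (S : Finset ℕ) (ρ : Finset (Finset ℕ)) : Prop :=
  IsPartitionOf n ρ ∧ S ∈ ρ ∧ ∀ B ∈ ρ, B ≠ S → B.card = 2

/-- The number of pairs `(ρ, r)` with `ρ ∈ M_S(n)` and `r` a root-connected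
orientation of `G(ρ)` with root `S`.  (This is `A_{k+1}(S)` when `n = |S| + 2k`.) -/
noncomputable def countA (n : ℕ) (S : Finset ℕ) : ℕ :=
  Nat.card {p : Finset (Finset ℕ) × (Finset ℕ → Finset ℕ → Prop) //
    MSPartition n S p.1 ∧ RootConnected p.1 p.2 S}

/-! Collapsing `a + 1` onto `a` (and shifting larger points down) sends the blocks of
`ρ ∈ M_S(n)` to those of a partition in `M_{S'}(n - 1)`; taking preimages inverts this.
Because `a` and `a + 1` lie in the same block `S`, the collapse is strictly monotone on pairs of
points from distinct blocks, so two blocks cross exactly when their images do. The crossing graphs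
are therefore isomorphic by a root-preserving bijection, along which root-connected orientations
are transported. -/

open Finset

def mapBlocks (u v : Finset ℕ → Finset ℕ)
    (p : Finset (Finset ℕ) × (Finset ℕ → Finset ℕ → Prop)) :
    Finset (Finset ℕ) × (Finset ℕ → Finset ℕ → Prop) :=
  (p.1.image u, fun B B' => B ∈ p.1.image u ∧ B' ∈ p.1.image u ∧ p.2 (v B) (v B'))

section MapBlocks

variable {u v : Finset ℕ → Finset ℕ}
  {p : Finset (Finset ℕ) × (Finset ℕ → Finset ℕ → Prop)}

lemma image_image_of_leftInvOn {ρ : Finset (Finset ℕ)} (hvu : ∀ B ∈ ρ, v (u B) = B) :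
    (ρ.image u).image v = ρ := by
  rw [image_image]
  exact (image_congr fun B hB => hvu B hB).trans image_id'

lemma mapBlocks_mapBlocks (hvu : ∀ B ∈ p.1, v (u B) = B)
    (hr : ∀ B B', p.2 B B' → B ∈ p.1 ∧ B' ∈ p.1) :
    mapBlocks v u (mapBlocks u v p) = p := by
  obtain ⟨ρ, r⟩ := p
  have hρ := image_image_of_leftInvOn hvu
  simp only [mapBlocks, hρ, Prod.mk.injEq, true_and]
  funext B B'
  apply propext
  constructor
  · rintro ⟨hB, hB', -, -, h⟩
    rwa [hvu B hB, hvu B' hB'] at h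
  · intro h
    obtain ⟨hB, hB'⟩ := hr B B' h
    exact ⟨hB, hB', mem_image_of_mem u hB, mem_image_of_mem u hB',
      by rwa [hvu B hB, hvu B' hB']⟩

lemma exists_mem_of_mem_image_of_leftInvOn {ρ : Finset (Finset ℕ)}
    (hvu : ∀ B ∈ ρ, v (u B) = B) {B : Finset ℕ} (hB : B ∈ ρ.image u) :
    v B ∈ ρ ∧ u (v B) = B := by
  obtain ⟨C, hC, rfl⟩ := mem_image.mp hB
  rw [hvu C hC]
  exact ⟨hC, rfl⟩

lemma isOrientation_mapBlocks (hvu : ∀ B ∈ p.1, v (u B) = B)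
    (hcross : ∀ B ∈ p.1, ∀ C ∈ p.1, B ≠ C → (Crosses (u B) (u C) ↔ Crosses B C))
    (h : IsOrientation p.1 p.2) :
    IsOrientation (mapBlocks u v p).1 (mapBlocks u v p).2 := by
  obtain ⟨hrel, hdir⟩ := h
  have hv := fun B => exists_mem_of_mem_image_of_leftInvOn (B := B) hvu
  constructor
  · rintro B B' ⟨hB, hB', hr⟩
    obtain ⟨hvB, huvB⟩ := hv B hB
    obtain ⟨hvB', huvB'⟩ := hv B' hB'
    obtain ⟨-, -, hne, hcr⟩ := hrel _ _ hr
    refine ⟨hB, hB', fun h => hne (congrArg v h), ?_⟩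
    rwa [← huvB, ← huvB', hcross _ hvB _ hvB' hne]
  · intro B hB B' hB' hne hcr
    obtain ⟨hvB, huvB⟩ := hv B hB
    obtain ⟨hvB', huvB'⟩ := hv B' hB'
    have hne' : v B ≠ v B' := fun h => hne (by rw [← huvB, ← huvB', h])
    rw [← huvB, ← huvB', hcross _ hvB _ hvB' hne'] at hcr
    have hiff := hdir _ hvB _ hvB' hne' hcr
    exact ⟨fun ⟨_, _, h⟩ ⟨_, _, h'⟩ => hiff.mp h h',
      fun h => ⟨hB, hB', hiff.mpr fun h' => h ⟨hB', hB, h'⟩⟩⟩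

lemma acyclicRel_mapBlocks (h : AcyclicRel p.2) : AcyclicRel (mapBlocks u v p).2 :=
  fun B hB => h (v B) (Relation.TransGen.lift v (fun _ _ h => h.2.2) B B hB)

lemma rootConnected_mapBlocks {S : Finset ℕ} (hvu : ∀ B ∈ p.1, v (u B) = B)
    (hcross : ∀ B ∈ p.1, ∀ C ∈ p.1, B ≠ C → (Crosses (u B) (u C) ↔ Crosses B C))
    (h : RootConnected p.1 p.2 S) :
    RootConnected (mapBlocks u v p).1 (mapBlocks u v p).2 (u S) := by
  obtain ⟨hor, hac, hS, hsrc, huniq⟩ := h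
  refine ⟨isOrientation_mapBlocks hvu hcross hor, acyclicRel_mapBlocks hac,
    mem_image_of_mem u hS, ?_, ?_⟩
  · rintro B ⟨-, -, hr⟩
    rw [hvu S hS] at hr
    exact hsrc _ hr
  · intro B hB hnone
    obtain ⟨hvB, huvB⟩ := exists_mem_of_mem_image_of_leftInvOn hvu hB
    rw [← huvB, huniq _ hvB fun C hC => ?_]
    have hCρ := (hor.1 _ _ hC).1
    exact hnone (u C) ⟨mem_image_of_mem u hCρ, hB, by rwa [hvu C hCρ]⟩

end MapBlocks

theorem countA_eq_of_blockBijection {n n' : ℕ} {S : Finset ℕ} (u v : Finset ℕ → Finset ℕ)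
    (hu : ∀ ρ, MSPartition n S ρ → MSPartition n' (u S) (ρ.image u))
    (hv : ∀ ρ, MSPartition n' (u S) ρ → MSPartition n S (ρ.image v))
    (hvu : ∀ ρ, MSPartition n S ρ → ∀ B ∈ ρ, v (u B) = B)
    (huv : ∀ ρ, MSPartition n' (u S) ρ → ∀ B ∈ ρ, u (v B) = B)
    (hcross : ∀ ρ, MSPartition n S ρ →
      ∀ B ∈ ρ, ∀ C ∈ ρ, B ≠ C → (Crosses (u B) (u C) ↔ Crosses B C)) :
    countA n S = countA n' (u S) := by
  have hvuS : ∀ ρ, MSPartition n' (u S) ρ → v (u S) = S := fun ρ h =>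
    hvu _ (hv ρ h) S (hv ρ h).2.1
  have hcross' : ∀ ρ, MSPartition n' (u S) ρ →
      ∀ B ∈ ρ, ∀ C ∈ ρ, B ≠ C → (Crosses (v B) (v C) ↔ Crosses B C) := by
    intro ρ h B hB C hC hne
    have hne' : v B ≠ v C := fun h' => hne (by rw [← huv ρ h B hB, h', huv ρ h C hC])
    rw [← hcross _ (hv ρ h) _ (mem_image_of_mem v hB) _ (mem_image_of_mem v hC) hne',
      huv ρ h B hB, huv ρ h C hC]
  apply Nat.card_congr
  exact
    { toFun := fun p => ⟨mapBlocks u v p.1, hu _ p.2.1,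
        rootConnected_mapBlocks (hvu _ p.2.1) (hcross _ p.2.1) p.2.2⟩
      invFun := fun p => ⟨mapBlocks v u p.1, hv _ p.2.1, by
        simpa only [hvuS _ p.2.1] using
          rootConnected_mapBlocks (huv _ p.2.1) (hcross' _ p.2.1) p.2.2⟩
      left_inv := fun p => Subtype.ext <| mapBlocks_mapBlocks (hvu _ p.2.1)
        fun _ _ h => ⟨(p.2.2.1.1 _ _ h).1, (p.2.2.1.1 _ _ h).2.1⟩
      right_inv := fun p => Subtype.ext <| mapBlocks_mapBlocks (huv _ p.2.1)
        fun _ _ h => ⟨(p.2.2.1.1 _ _ h).1, (p.2.2.1.1 _ _ h).2.1⟩ }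

def collapse (a x : ℕ) : ℕ := if x ≤ a then x else x - 1

def collapsePreimage (n a : ℕ) (X : Finset ℕ) : Finset ℕ :=
  (range n).filter fun x => collapse a x ∈ X

section Collapse

variable {n a x y : ℕ} {S B C X : Finset ℕ}

lemma collapse_eq_collapse_iff :
    collapse a x = collapse a y ↔ x = y ∨ (x = a ∧ y = a + 1) ∨ (x = a + 1 ∧ y = a) := by
  unfold collapse; split_ifs <;> omega

lemma collapse_lt_collapse_iff :
    collapse a x < collapse a y ↔ x < y ∧ ¬(x = a ∧ y = a + 1) := by
  unfold collapse; split_ifs <;> omega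

lemma image_collapse_range (han : a + 1 < n) : (range n).image (collapse a) = range (n - 1) := by
  ext y
  simp only [mem_image, mem_range]
  constructor
  · rintro ⟨x, hx, rfl⟩
    unfold collapse; split_ifs <;> omega
  · intro hy
    refine ⟨if y ≤ a then y else y + 1, ?_, ?_⟩
    · split_ifs <;> omega
    · unfold collapse; split_ifs <;> omega

lemma image_erase_collapse (ha : a ∈ S) :
    (S.erase (a + 1)).image (collapse a) = S.image (collapse a) := by
  by_cases ha1 : a + 1 ∈ S
  · conv_rhs => rw [← insert_erase ha1, image_insert]
    have hfa : collapse a a ∈ (S.erase (a + 1)).image (collapse a) :=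
      mem_image_of_mem _ (mem_erase.mpr ⟨(Nat.lt_succ_self a).ne, ha⟩)
    exact (insert_eq_of_mem (by simpa [collapse] using hfa)).symm
  · rw [erase_eq_of_notMem ha1]

lemma card_image_collapse (h : a + 1 ∉ B) : (B.image (collapse a)).card = B.card :=
  card_image_of_injOn fun x hx y hy hxy => by
    rcases collapse_eq_collapse_iff.mp hxy with rfl | ⟨-, rfl⟩ | ⟨rfl, -⟩
    · rfl
    · exact absurd hy h
    · exact absurd hx h

lemma collapse_lt_collapse_of_mem (hB : a ∈ B ↔ a + 1 ∈ B) (hBC : Disjoint B C)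
    (hx : x ∈ B) (hy : y ∈ C) (hxy : x < y) : collapse a x < collapse a y :=
  collapse_lt_collapse_iff.mpr
    ⟨hxy, by rintro ⟨rfl, rfl⟩; exact disjoint_left.mp hBC (hB.mp hx) hy⟩

lemma disjoint_image_collapse (hB : a ∈ B ↔ a + 1 ∈ B) (hBC : Disjoint B C) :
    Disjoint (B.image (collapse a)) (C.image (collapse a)) := by
  simp only [disjoint_left, mem_image, not_exists, not_and]
  rintro _ ⟨x, hx, rfl⟩ y hy hxy
  rcases collapse_eq_collapse_iff.mp hxy.symm with rfl | ⟨rfl, rfl⟩ | ⟨rfl, rfl⟩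
  · exact disjoint_left.mp hBC hx hy
  · exact disjoint_left.mp hBC (hB.mp hx) hy
  · exact disjoint_left.mp hBC (hB.mpr hx) hy

lemma crosses_image_collapse_iff (hB : a ∈ B ↔ a + 1 ∈ B) (hC : a ∈ C ↔ a + 1 ∈ C)
    (hBC : Disjoint B C) :
    Crosses (B.image (collapse a)) (C.image (collapse a)) ↔ Crosses B C := by
  have hBC' {x y} := @collapse_lt_collapse_of_mem a x y B C hB hBC
  have hCB' {x y} := @collapse_lt_collapse_of_mem a x y C B hC hBC.symm
  constructor
  · rintro ⟨_, hi', _, hk', _, hj', _, hl', h⟩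
    obtain ⟨i, hi, rfl⟩ := mem_image.mp hi'
    obtain ⟨k, hk, rfl⟩ := mem_image.mp hk'
    obtain ⟨j, hj, rfl⟩ := mem_image.mp hj'
    obtain ⟨l, hl, rfl⟩ := mem_image.mp hl'
    simp only [gt_iff_lt, collapse_lt_collapse_iff] at h
    exact ⟨i, hi, k, hk, j, hj, l, hl, by omega⟩
  · rintro ⟨i, hi, k, hk, j, hj, l, hl, h⟩
    refine ⟨_, mem_image_of_mem _ hi, _, mem_image_of_mem _ hk,
      _, mem_image_of_mem _ hj, _, mem_image_of_mem _ hl, ?_⟩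
    rcases h with ⟨h₁, h₂, h₃⟩ | ⟨h₁, h₂, h₃⟩
    · exact Or.inl ⟨hBC' hi hj h₁, hCB' hj hk h₂, hBC' hk hl h₃⟩
    · exact Or.inr ⟨hCB' hj hi h₁, hBC' hk hj h₂, hCB' hl hk h₃⟩

lemma collapsePreimage_image_collapse (hB : a ∈ B ↔ a + 1 ∈ B) (hBn : B ⊆ range n) :
    collapsePreimage n a (B.image (collapse a)) = B := by
  ext x
  simp only [collapsePreimage, mem_filter, mem_range, mem_image]
  constructor
  · rintro ⟨-, y, hy, hxy⟩
    rcases collapse_eq_collapse_iff.mp hxy with rfl | ⟨rfl, rfl⟩ | ⟨rfl, rfl⟩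
    · exact hy
    · exact hB.mp hy
    · exact hB.mpr hy
  · exact fun hx => ⟨mem_range.mp (hBn hx), x, hx, rfl⟩

lemma image_collapse_collapsePreimage (han : a + 1 < n) (hX : X ⊆ range (n - 1)) :
    (collapsePreimage n a X).image (collapse a) = X := by
  rw [collapsePreimage, ← filter_image (p := (· ∈ X)), image_collapse_range han,
    filter_mem_eq_inter, inter_eq_right.mpr hX]

end Collapse

section Partition

variable {n a : ℕ} {S B : Finset ℕ} {ρ : Finset (Finset ℕ)}

lemma IsPartitionOf.subset_range (h : IsPartitionOf n ρ) (hB : B ∈ ρ) : B ⊆ range n :=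
  h.2.2 ▸ le_sup (f := id) hB

lemma IsPartitionOf.mem_iff_succ_mem (h : IsPartitionOf n ρ) (hS : S ∈ ρ) (ha : a ∈ S)
    (ha1 : a + 1 ∈ S) (hB : B ∈ ρ) : a ∈ B ↔ a + 1 ∈ B := by
  by_cases hBS : B = S
  · subst hBS
    exact iff_of_true ha ha1
  · have hdis := h.2.1 B hB S hS hBS
    exact iff_of_false (disjoint_right.mp hdis ha) (disjoint_right.mp hdis ha1)

lemma IsPartitionOf.map_collapse (h : IsPartitionOf n ρ)
    (hsat : ∀ B ∈ ρ, a ∈ B ↔ a + 1 ∈ B) (han : a + 1 < n) :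
    IsPartitionOf (n - 1) (ρ.image (·.image (collapse a))) := by
  obtain ⟨hne, hdis, hsup⟩ := h
  refine ⟨?_, ?_, ?_⟩
  · simp only [mem_image]
    rintro _ ⟨B, hB, rfl⟩
    exact (hne B hB).image _
  · simp only [mem_image]
    rintro _ ⟨B, hB, rfl⟩ _ ⟨C, hC, rfl⟩ hBC
    exact disjoint_image_collapse (hsat B hB) (hdis B hB C hC (by rintro rfl; exact hBC rfl))
  · rw [← image_collapse_range han, ← hsup]
    ext y
    simp only [mem_sup, mem_image, id_eq, exists_exists_and_eq_and]
    tauto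

lemma IsPartitionOf.map_collapsePreimage (h : IsPartitionOf (n - 1) ρ) (han : a + 1 < n) :
    IsPartitionOf n (ρ.image (collapsePreimage n a)) := by
  obtain ⟨hne, hdis, hsup⟩ := h
  refine ⟨?_, ?_, ?_⟩
  · simp only [mem_image]
    rintro _ ⟨X, hX, rfl⟩
    obtain ⟨y, hy⟩ := hne X hX
    have hy' : y ∈ (range n).image (collapse a) := by
      rw [image_collapse_range han, ← hsup]
      exact mem_sup.mpr ⟨X, hX, hy⟩
    obtain ⟨x, hx, rfl⟩ := mem_image.mp hy'
    exact ⟨x, mem_filter.mpr ⟨hx, hy⟩⟩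
  · simp only [mem_image]
    rintro _ ⟨X, hX, rfl⟩ _ ⟨Y, hY, rfl⟩ hXY
    have hdisXY := hdis X hX Y hY (by rintro rfl; exact hXY rfl)
    exact disjoint_left.mpr fun x hx hx' =>
      disjoint_left.mp hdisXY (mem_filter.mp hx).2 (mem_filter.mp hx').2
  · ext x
    simp only [mem_sup, mem_image, id_eq, exists_exists_and_eq_and, collapsePreimage, mem_filter]
    constructor
    · rintro ⟨X, -, hx, -⟩
      exact hx
    · intro hx
      have hfx : collapse a x ∈ ρ.sup id := by
        rw [hsup, ← image_collapse_range han]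
        exact mem_image_of_mem _ hx
      obtain ⟨X, hX, hfxX⟩ := mem_sup.mp hfx
      exact ⟨X, hX, hx, hfxX⟩

lemma MSPartition.map_collapse (h : MSPartition n S ρ) (ha : a ∈ S) (ha1 : a + 1 ∈ S) :
    MSPartition (n - 1) (S.image (collapse a)) (ρ.image (·.image (collapse a))) := by
  obtain ⟨hpart, hS, hcard⟩ := h
  refine ⟨hpart.map_collapse (fun B hB => hpart.mem_iff_succ_mem hS ha ha1 hB)
    (mem_range.mp (hpart.subset_range hS ha1)), mem_image_of_mem _ hS, ?_⟩
  simp only [mem_image]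
  rintro _ ⟨B, hB, rfl⟩ hBS
  have hne : B ≠ S := by rintro rfl; exact hBS rfl
  rw [card_image_collapse (disjoint_left.mp (hpart.2.1 B hB S hS hne) · ha1), hcard B hB hne]

lemma MSPartition.map_collapsePreimage (h : MSPartition (n - 1) (S.image (collapse a)) ρ)
    (hSn : S ⊆ range n) (ha : a ∈ S) (ha1 : a + 1 ∈ S) :
    MSPartition n S (ρ.image (collapsePreimage n a)) := by
  obtain ⟨hpart, hS, hcard⟩ := h
  have han : a + 1 < n := mem_range.mp (hSn ha1)
  have hSS : collapsePreimage n a (S.image (collapse a)) = S :=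
    collapsePreimage_image_collapse (iff_of_true ha ha1) hSn
  refine ⟨hpart.map_collapsePreimage han, hSS ▸ mem_image_of_mem _ hS, ?_⟩
  simp only [mem_image]
  rintro _ ⟨X, hX, rfl⟩ hXS
  have hne : X ≠ S.image (collapse a) := by rintro rfl; exact hXS hSS
  -- `a + 1` and `a` both collapse to `a`, which lies in the root block
  have ha1X : a + 1 ∉ collapsePreimage n a X := fun h =>
    disjoint_left.mp (hpart.2.1 X hX _ hS hne) (mem_filter.mp h).2
      (mem_image.mpr ⟨a, ha, by simp [collapse]⟩)
  rw [← card_image_collapse ha1X, image_collapse_collapsePreimage han (hpart.subset_range hX),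
    hcard X hX hne]

end Partition

theorem countA_merge_general (n : ℕ) (S : Finset ℕ) (hS : S ⊆ Finset.range n)
    (a : ℕ) (ha : a ∈ S) (ha1 : a + 1 ∈ S) :
    countA n S
      = countA (n - 1) ((S.erase (a + 1)).image fun x => if x ≤ a then x else x - 1) := by
  have hsat {ρ} (h : MSPartition n S ρ) {B} (hB : B ∈ ρ) : a ∈ B ↔ a + 1 ∈ B :=
    h.1.mem_iff_succ_mem h.2.1 ha ha1 hB
  rw [show ((S.erase (a + 1)).image fun x => if x ≤ a then x else x - 1) = S.image (collapse a)
    from image_erase_collapse ha]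
  exact countA_eq_of_blockBijection (·.image (collapse a)) (collapsePreimage n a)
    (fun _ h => h.map_collapse ha ha1) (fun _ h => h.map_collapsePreimage hS ha ha1)
    (fun _ h _ hB => collapsePreimage_image_collapse (hsat h hB) (h.1.subset_range hB))
    (fun _ h _ hX =>
      image_collapse_collapsePreimage (mem_range.mp (hS ha1)) (h.1.subset_range hX))
    (fun _ h B hB C hC hBC =>
      crosses_image_collapse_iff (hsat h hB) (hsat h hC) (h.1.2.1 B hB C hC hBC))

/-- Merging invariance: if the root set `S` contains two consecutive elements
`a, a+1`, they may be merged into a single point (all larger elements of the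
ground set shifting down by one) without changing the count. -/
theorem countA_merge (n k : ℕ) (S : Finset ℕ) (hS : S ⊆ Finset.range n)
    (hn : n = S.card + 2 * k) (a : ℕ) (ha : a ∈ S) (ha1 : a + 1 ∈ S) :
    countA n S
      = countA (n - 1) ((S.erase (a + 1)).image fun x => if x ≤ a then x else x - 1) :=
  countA_merge_general n S hS a ha ha1
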